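/- For every f : ℤ^d → ℝ, the functions (L_n∘U_n)(f) and (U_n∘L_n)(f) have neither local maximum sets nor local minimum sets of cardinality at most n. Moreover, (L_n∘U_n)(f) = f and (U_n∘L_n)(f) = f hold if and only if f has no local maximum set and no local minimum set of cardinality at most n. -/

import Mathlib

open Set

/-- A connection (connected class) on `ℤ^d`. -/
def IsConnection {d : ℕ} (C : Set (Set (Fin d → ℤ))) : Prop :=
  ∅ ∈ C ∧ (∀ x : Fin d → ℤ, {x} ∈ C) ∧
    ∀ S : Set (Set (Fin d → ℤ)), (∀ A ∈ S, A ∈ C) → (⋂₀ S).Nonempty → ⋃₀ S ∈ C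

/-- A connection on `ℤ^d` satisfying the additional axioms (α), (β), (γ). -/
def GoodConnection {d : ℕ} (C : Set (Set (Fin d → ℤ))) : Prop :=
  IsConnection C ∧
  Set.univ ∈ C ∧
  (∀ (a : Fin d → ℤ), ∀ V ∈ C, (fun x => a + x) '' V ∈ C) ∧
  (∀ V ∈ C, ∀ W ∈ C, V ⊂ W → ∃ x ∈ W \ V, insert x V ∈ C)

/-- `𝒩_n(x)`: the connected sets of cardinality `n+1` containing `x`. -/
def Nn {d : ℕ} (C : Set (Set (Fin d → ℤ))) (n : ℕ) (x : Fin d → ℤ) :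
    Set (Set (Fin d → ℤ)) :=
  {V | V ∈ C ∧ x ∈ V ∧ V.encard = (n : ℕ∞) + 1}

/-- The operator `L_n`. -/
noncomputable def Ln {d : ℕ} (C : Set (Set (Fin d → ℤ))) (n : ℕ)
    (f : (Fin d → ℤ) → ℝ) (x : Fin d → ℤ) : ℝ :=
  sSup ((fun V => sInf (f '' V)) '' Nn C n x)

/-- The operator `U_n`. -/
noncomputable def Un {d : ℕ} (C : Set (Set (Fin d → ℤ))) (n : ℕ)
    (f : (Fin d → ℤ) → ℝ) (x : Fin d → ℤ) : ℝ :=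
  sInf ((fun V => sSup (f '' V)) '' Nn C n x)

/-- The set of points adjacent to `V`. -/
def adjSet {d : ℕ} (C : Set (Set (Fin d → ℤ))) (V : Set (Fin d → ℤ)) :
    Set (Fin d → ℤ) :=
  {x | x ∉ V ∧ insert x V ∈ C}

/-- `V` is a local maximum set of `f`. -/
def IsLocalMaxSet {d : ℕ} (C : Set (Set (Fin d → ℤ))) (f : (Fin d → ℤ) → ℝ)
    (V : Set (Fin d → ℤ)) : Prop :=
  V ∈ C ∧ V.Finite ∧ V.Nonempty ∧ ∀ y ∈ adjSet C V, ∀ z ∈ V, f y < f z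

/-- `V` is a local minimum set of `f`. -/
def IsLocalMinSet {d : ℕ} (C : Set (Set (Fin d → ℤ))) (f : (Fin d → ℤ) → ℝ)
    (V : Set (Fin d → ℤ)) : Prop :=
  V ∈ C ∧ V.Finite ∧ V.Nonempty ∧ ∀ y ∈ adjSet C V, ∀ z ∈ V, f z < f y

section Helpers

variable {d : ℕ} {C : Set (Set (Fin d → ℤ))} {n : ℕ}

lemma coe_succ_lt_top (n : ℕ) : ((n : ℕ∞) + 1) < ⊤ := by
  have : ((n + 1 : ℕ) : ℕ∞) ≠ ⊤ := ENat.coe_ne_top _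
  push_cast at this
  exact lt_top_iff_ne_top.2 this

lemma union_mem (hC : GoodConnection C) {V W : Set (Fin d → ℤ)}
    (hV : V ∈ C) (hW : W ∈ C) (h : (V ∩ W).Nonempty) : V ∪ W ∈ C := by
  have h1 : ∀ A ∈ ({V, W} : Set (Set (Fin d → ℤ))), A ∈ C := by
    rintro A hA
    rcases hA with rfl | rfl
    · exact hV
    · exact hW
  have h2 := hC.1.2.2 {V, W} h1 (by rwa [Set.sInter_pair])
  rwa [Set.sUnion_pair] at h2

lemma exists_adj (hd : 1 ≤ d) (hC : GoodConnection C) {V : Set (Fin d → ℤ)}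
    (hV : V ∈ C) (hfin : V.Finite) : ∃ y, y ∈ adjSet C V := by
  haveI : Infinite (Fin d → ℤ) :=
    Infinite.of_injective (fun z : ℤ => fun _ => z)
      (fun a b h => congrFun h ⟨0, hd⟩)
  have hss : V ⊂ univ := by
    rw [Set.ssubset_univ_iff]
    intro h
    rw [h] at hfin
    exact Set.infinite_univ hfin
  obtain ⟨x, hx, hins⟩ := hC.2.2.2 V hV univ hC.2.1 hss
  exact ⟨x, hx.2, hins⟩

lemma exists_Nn_superset (hd : 1 ≤ d) (hC : GoodConnection C) :
    ∀ (k : ℕ) (V : Set (Fin d → ℤ)), V ∈ C → ∀ x, x ∈ V →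
      V.encard + (k : ℕ∞) = (n : ℕ∞) + 1 → ∃ W ∈ Nn C n x, V ⊆ W := by
  intro k
  induction k with
  | zero =>
    intro V hV x hx hcard
    exact ⟨V, ⟨hV, hx, by simpa using hcard⟩, subset_rfl⟩
  | succ k ih =>
    intro V hV x hx hcard
    have hfin : V.Finite := by
      rw [← Set.encard_lt_top_iff]
      calc V.encard ≤ V.encard + (((k:ℕ)+1:ℕ) : ℕ∞) := le_self_add
        _ = (n : ℕ∞) + 1 := hcard
        _ < ⊤ := coe_succ_lt_top n
    obtain ⟨y, hy⟩ := exists_adj hd hC hV hfin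
    have h2 : (insert y V).encard + (k : ℕ∞) = (n : ℕ∞) + 1 := by
      rw [Set.encard_insert_of_notMem hy.1, add_assoc, add_comm (1 : ℕ∞) (k : ℕ∞)]
      push_cast at hcard
      exact hcard
    obtain ⟨W, hW, hsub⟩ := ih (insert y V) hy.2 x (mem_insert_of_mem _ hx) h2
    exact ⟨W, hW, (subset_insert _ _).trans hsub⟩

lemma Nn_nonempty (hd : 1 ≤ d) (hC : GoodConnection C) (x : Fin d → ℤ) :
    (Nn C n x).Nonempty := by
  obtain ⟨W, hW, _⟩ := exists_Nn_superset hd hC n {x} (hC.1.2.1 x) x (mem_singleton x)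
    (by rw [Set.encard_singleton]; rw [add_comm])
  exact ⟨W, hW⟩

lemma Nn_finite {x : Fin d → ℤ} {W : Set (Fin d → ℤ)} (hW : W ∈ Nn C n x) : W.Finite := by
  rw [← Set.encard_lt_top_iff, hW.2.2]
  exact coe_succ_lt_top n

lemma Nn_not_subset {x : Fin d → ℤ} {W V : Set (Fin d → ℤ)} (hW : W ∈ Nn C n x)
    (hV : V.encard ≤ (n : ℕ∞)) : ¬ W ⊆ V := by
  intro hsub
  have := (Set.encard_mono hsub).trans hV
  rw [hW.2.2] at this
  have h2 : ((n : ℕ∞) + 1) ≤ (n : ℕ∞) := this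
  have h3 : ((n + 1 : ℕ) : ℕ∞) ≤ ((n : ℕ) : ℕ∞) := by push_cast; exact h2
  have := Nat.cast_le.mp h3
  omega

lemma exists_adj_mem (hC : GoodConnection C) {V W : Set (Fin d → ℤ)} {x : Fin d → ℤ}
    (hV : V ∈ C) (hW : W ∈ C) (hxV : x ∈ V) (hxW : x ∈ W) (hns : ¬ W ⊆ V) :
    ∃ y ∈ adjSet C V, y ∈ W := by
  have hu : V ∪ W ∈ C := union_mem hC hV hW ⟨x, hxV, hxW⟩
  have hss : V ⊂ V ∪ W := by
    refine ⟨subset_union_left, fun h => hns (fun z hz => h (Or.inr hz))⟩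
  obtain ⟨y, hy, hins⟩ := hC.2.2.2 V hV (V ∪ W) hu hss
  exact ⟨y, ⟨hy.2, hins⟩, hy.1.resolve_left hy.2⟩

-- sInf/sSup helpers
lemma sInf_image_le {f : (Fin d → ℤ) → ℝ} {W : Set (Fin d → ℤ)} {x : Fin d → ℤ}
    (hfin : W.Finite) (hx : x ∈ W) : sInf (f '' W) ≤ f x :=
  csInf_le (hfin.image f).bddBelow (mem_image_of_mem f hx)

lemma le_sSup_image {f : (Fin d → ℤ) → ℝ} {W : Set (Fin d → ℤ)} {x : Fin d → ℤ}
    (hfin : W.Finite) (hx : x ∈ W) : f x ≤ sSup (f '' W) :=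
  le_csSup (hfin.image f).bddAbove (mem_image_of_mem f hx)

lemma exists_sInf_image_eq {f : (Fin d → ℤ) → ℝ} {W : Set (Fin d → ℤ)}
    (hfin : W.Finite) (hne : W.Nonempty) : ∃ y ∈ W, sInf (f '' W) = f y := by
  obtain ⟨y, hy, he⟩ := (hne.image f).csInf_mem (hfin.image f)
  exact ⟨y, hy, he.symm⟩

lemma exists_sSup_image_eq {f : (Fin d → ℤ) → ℝ} {W : Set (Fin d → ℤ)}
    (hfin : W.Finite) (hne : W.Nonempty) : ∃ y ∈ W, sSup (f '' W) = f y := by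
  obtain ⟨y, hy, he⟩ := (hne.image f).csSup_mem (hfin.image f)
  exact ⟨y, hy, he.symm⟩

lemma Ln_le_self (hd : 1 ≤ d) (hC : GoodConnection C) (f : (Fin d → ℤ) → ℝ)
    (x : Fin d → ℤ) : Ln C n f x ≤ f x := by
  apply csSup_le ((Nn_nonempty hd hC x).image _)
  rintro r ⟨W, hW, rfl⟩
  exact sInf_image_le (Nn_finite hW) hW.2.1

lemma self_le_Un (hd : 1 ≤ d) (hC : GoodConnection C) (f : (Fin d → ℤ) → ℝ)
    (x : Fin d → ℤ) : f x ≤ Un C n f x := by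
  apply le_csInf ((Nn_nonempty hd hC x).image _)
  rintro r ⟨W, hW, rfl⟩
  exact le_sSup_image (Nn_finite hW) hW.2.1

lemma le_Ln (f : (Fin d → ℤ) → ℝ) {W : Set (Fin d → ℤ)} {x : Fin d → ℤ}
    (hW : W ∈ Nn C n x) : sInf (f '' W) ≤ Ln C n f x := by
  apply le_csSup
  · exact ⟨f x, by rintro r ⟨W', hW', rfl⟩; exact sInf_image_le (Nn_finite hW') hW'.2.1⟩
  · exact mem_image_of_mem _ hW

lemma Un_le (f : (Fin d → ℤ) → ℝ) {W : Set (Fin d → ℤ)} {x : Fin d → ℤ}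
    (hW : W ∈ Nn C n x) : Un C n f x ≤ sSup (f '' W) := by
  apply csInf_le
  · exact ⟨f x, by rintro r ⟨W', hW', rfl⟩; exact le_sSup_image (Nn_finite hW') hW'.2.1⟩
  · exact mem_image_of_mem _ hW

end Helpers

section Duality

variable {d : ℕ} {C : Set (Set (Fin d → ℤ))} {n : ℕ}

lemma sInf_neg_image (s : Set ℝ) : sInf (Neg.neg '' s) = -sSup s := by
  rw [Set.image_neg_eq_neg, Real.sInf_def, neg_neg]

lemma sSup_neg_image (s : Set ℝ) : sSup (Neg.neg '' s) = -sInf s := by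
  rw [Set.image_neg_eq_neg, Real.sInf_def, neg_neg]

lemma neg_image (f : (Fin d → ℤ) → ℝ) (W : Set (Fin d → ℤ)) :
    (-f) '' W = Neg.neg '' (f '' W) := by
  rw [← Set.image_comp]
  rfl

lemma Ln_neg (f : (Fin d → ℤ) → ℝ) : Ln C n (-f) = -(Un C n f) := by
  funext x
  show sSup _ = _
  have h1 : (fun V => sInf ((-f) '' V)) '' Nn C n x
      = Neg.neg '' ((fun V => sSup (f '' V)) '' Nn C n x) := by
    rw [Set.image_image]
    apply Set.image_congr'
    intro W
    rw [neg_image, sInf_neg_image]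
  rw [h1, sSup_neg_image]
  rfl

lemma Un_neg (f : (Fin d → ℤ) → ℝ) : Un C n (-f) = -(Ln C n f) := by
  have := Ln_neg (C := C) (n := n) (-f)
  rw [neg_neg] at this
  rw [this, neg_neg]

lemma isLocalMinSet_neg_iff (f : (Fin d → ℤ) → ℝ) (V : Set (Fin d → ℤ)) :
    IsLocalMinSet C (-f) V ↔ IsLocalMaxSet C f V := by
  unfold IsLocalMinSet IsLocalMaxSet
  simp only [Pi.neg_apply, neg_lt_neg_iff]

lemma isLocalMaxSet_neg_iff (f : (Fin d → ℤ) → ℝ) (V : Set (Fin d → ℤ)) :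
    IsLocalMaxSet C (-f) V ↔ IsLocalMinSet C f V := by
  unfold IsLocalMinSet IsLocalMaxSet
  simp only [Pi.neg_apply, neg_lt_neg_iff]

lemma Ln_idem (hd : 1 ≤ d) (hC : GoodConnection C) (f : (Fin d → ℤ) → ℝ) :
    Ln C n (Ln C n f) = Ln C n f := by
  funext x
  apply le_antisymm (Ln_le_self hd hC _ x)
  show Ln C n f x ≤ Ln C n (Ln C n f) x
  apply csSup_le ((Nn_nonempty hd hC x).image _)
  rintro r ⟨W, hW, rfl⟩
  have h1 : sInf (f '' W) ≤ sInf (Ln C n f '' W) := by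
    apply le_csInf ((Set.Nonempty.image _ ⟨x, hW.2.1⟩))
    rintro r ⟨y, hy, rfl⟩
    exact le_Ln f ⟨hW.1, hy, hW.2.2⟩
  exact h1.trans (le_Ln (Ln C n f) hW)

lemma Un_idem (hd : 1 ≤ d) (hC : GoodConnection C) (f : (Fin d → ℤ) → ℝ) :
    Un C n (Un C n f) = Un C n f := by
  have h1 : Un C n f = -(Ln C n (-f)) := by rw [Ln_neg, neg_neg]
  rw [h1, Un_neg, Ln_idem hd hC]

end Duality

section Core

variable {d : ℕ} {C : Set (Set (Fin d → ℤ))} {n : ℕ}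

lemma lt_Un_of_isLocalMinSet (hd : 1 ≤ d) (hC : GoodConnection C)
    (hadj : ∀ V ∈ C, V.Finite → (adjSet C V).Finite)
    {f : (Fin d → ℤ) → ℝ} {V : Set (Fin d → ℤ)}
    (hmin : IsLocalMinSet C f V) (hcard : V.encard ≤ (n : ℕ∞)) :
    ∀ x ∈ V, f x < Un C n f x := by
  obtain ⟨hVC, hVfin, hVne, hlt⟩ := hmin
  have hadjfin : (adjSet C V).Finite := hadj V hVC hVfin
  have hadjne : (adjSet C V).Nonempty := exists_adj hd hC hVC hVfin
  set m := sInf (f '' adjSet C V) with hm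
  obtain ⟨y₀, hy₀, hy₀e⟩ := exists_sInf_image_eq (f := f) hadjfin hadjne
  intro x hx
  have hfx : f x < m := by rw [hm, hy₀e]; exact hlt y₀ hy₀ x hx
  refine lt_of_lt_of_le hfx ?_
  apply le_csInf ((Nn_nonempty hd hC x).image _)
  rintro r ⟨W, hW, rfl⟩
  obtain ⟨y, hyadj, hyW⟩ := exists_adj_mem hC hVC hW.1 hx hW.2.1 (Nn_not_subset hW hcard)
  calc m ≤ f y := csInf_le (hadjfin.image f).bddBelow (mem_image_of_mem f hyadj)
    _ ≤ sSup (f '' W) := le_sSup_image (Nn_finite hW) hyW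

lemma Ln_lt_of_isLocalMaxSet (hd : 1 ≤ d) (hC : GoodConnection C)
    (hadj : ∀ V ∈ C, V.Finite → (adjSet C V).Finite)
    {f : (Fin d → ℤ) → ℝ} {V : Set (Fin d → ℤ)}
    (hmax : IsLocalMaxSet C f V) (hcard : V.encard ≤ (n : ℕ∞)) :
    ∀ x ∈ V, Ln C n f x < f x := by
  intro x hx
  have h1 := lt_Un_of_isLocalMinSet hd hC hadj (n := n)
    ((isLocalMinSet_neg_iff f V).2 hmax) hcard x hx
  rw [Un_neg] at h1
  simp only [Pi.neg_apply] at h1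
  linarith

lemma exists_isLocalMinSet_of_lt_Un (hd : 1 ≤ d) (hC : GoodConnection C)
    {f : (Fin d → ℤ) → ℝ} {x : Fin d → ℤ} (hlt : f x < Un C n f x) :
    ∃ V, V.encard ≤ (n : ℕ∞) ∧ IsLocalMinSet C f V := by
  by_contra hno
  push_neg at hno
  have aux : ∀ (i : ℕ) (V : Set (Fin d → ℤ)), V ∈ C → x ∈ V → (∀ z ∈ V, f z ≤ f x) →
      V.encard + (i : ℕ∞) = (n : ℕ∞) + 1 → False := by
    intro i
    induction i with
    | zero =>
      intro V hVC hxV hle hcard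
      have hWNn : V ∈ Nn C n x := ⟨hVC, hxV, by simpa using hcard⟩
      have h1 : Un C n f x ≤ sSup (f '' V) := Un_le f hWNn
      have h2 : sSup (f '' V) ≤ f x := by
        apply csSup_le (Set.Nonempty.image _ ⟨x, hxV⟩)
        rintro r ⟨z, hz, rfl⟩
        exact hle z hz
      exact absurd (h1.trans h2) (not_le.2 hlt)
    | succ i ih =>
      intro V hVC hxV hle hcard
      have harith : V.encard + (i : ℕ∞) = (n : ℕ∞) := by
        push_cast at hcard
        rw [← add_assoc] at hcard
        exact WithTop.add_right_cancel ENat.one_ne_top hcard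
      have hVn : V.encard ≤ (n : ℕ∞) := le_self_add.trans_eq harith
      have hVfin : V.Finite := Set.encard_lt_top_iff.mp
        (lt_of_le_of_lt hVn (lt_of_le_of_lt (le_of_eq rfl) (by
          have : ((n : ℕ∞)) < ⊤ := lt_top_iff_ne_top.2 (ENat.coe_ne_top n)
          exact this)))
      have hnot := hno V hVn
      have hne : ∃ y ∈ adjSet C V, ∃ z ∈ V, f y ≤ f z := by
        by_contra hcon
        push_neg at hcon
        exact hnot ⟨hVC, hVfin, ⟨x, hxV⟩, fun y hy z hz => hcon y hy z hz⟩
      obtain ⟨y, hy, z, hz, hyz⟩ := hne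
      apply ih (insert y V) hy.2 (mem_insert_of_mem _ hxV)
      · rintro w (rfl | hw)
        · exact hyz.trans (hle z hz)
        · exact hle w hw
      · rw [Set.encard_insert_of_notMem hy.1, add_assoc, add_comm (1 : ℕ∞) (i : ℕ∞)]
        push_cast at hcard
        exact hcard
  apply aux n {x} (hC.1.2.1 x) (mem_singleton x)
  · intro z hz
    rw [mem_singleton_iff] at hz
    rw [hz]
  · rw [Set.encard_singleton, add_comm]

lemma exists_isLocalMaxSet_of_Ln_lt (hd : 1 ≤ d) (hC : GoodConnection C)
    {f : (Fin d → ℤ) → ℝ} {x : Fin d → ℤ} (hlt : Ln C n f x < f x) :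
    ∃ V, V.encard ≤ (n : ℕ∞) ∧ IsLocalMaxSet C f V := by
  have h1 : (-f) x < Un C n (-f) x := by
    rw [Un_neg]
    simp only [Pi.neg_apply]
    linarith
  obtain ⟨V, hV, hmin⟩ := exists_isLocalMinSet_of_lt_Un hd hC h1
  exact ⟨V, hV, (isLocalMinSet_neg_iff f V).1 hmin⟩

lemma keyLemma_min (hd : 1 ≤ d) (hC : GoodConnection C)
    (hadj : ∀ V ∈ C, V.Finite → (adjSet C V).Finite)
    {g : (Fin d → ℤ) → ℝ} (hU : ∀ x, Un C n g x ≤ g x) :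
    ∀ V, V.encard ≤ (n : ℕ∞) → ¬ IsLocalMinSet C (Ln C n g) V := by
  intro V hVn hmin
  obtain ⟨hVC, hVfin, hVne, hlt⟩ := hmin
  set h := Ln C n g with hh
  have hadjfin : (adjSet C V).Finite := hadj V hVC hVfin
  have hadjne : (adjSet C V).Nonempty := exists_adj hd hC hVC hVfin
  set m := sInf (h '' adjSet C V) with hm
  have hmle : ∀ y ∈ adjSet C V, m ≤ h y := fun y hy =>
    csInf_le (hadjfin.image h).bddBelow (mem_image_of_mem h hy)
  have hVlt : ∀ z ∈ V, h z < m := by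
    obtain ⟨y₀, hy₀, he⟩ := exists_sInf_image_eq (f := h) hadjfin hadjne
    intro z hz
    rw [hm, he]
    exact hlt y₀ hy₀ z hz
  have hgadj : ∀ y ∈ adjSet C V, m ≤ g y := fun y hy =>
    (hmle y hy).trans (Ln_le_self hd hC g y)
  -- Step 1 : g ≥ m on V
  have hgV : ∀ z ∈ V, m ≤ g z := by
    intro z hz
    by_contra hcon
    push_neg at hcon
    have h1 : Un C n g z < m := lt_of_le_of_lt (hU z) hcon
    have h2 : ∃ W ∈ Nn C n z, sSup (g '' W) < m := by
      by_contra hc2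
      push_neg at hc2
      have : m ≤ Un C n g z := by
        apply le_csInf ((Nn_nonempty hd hC z).image _)
        rintro r ⟨W, hW, rfl⟩
        exact hc2 W hW
      exact absurd h1 (not_lt.2 this)
    obtain ⟨W, hW, hWs⟩ := h2
    obtain ⟨y, hyadj, hyW⟩ := exists_adj_mem hC hVC hW.1 hz hW.2.1 (Nn_not_subset hW hVn)
    exact absurd ((hgadj y hyadj).trans (le_sSup_image (Nn_finite hW) hyW)) (not_le.2 hWs)
  -- Step 2 : grow a connected superset of V on which g ≥ m
  obtain ⟨x₀, hx₀⟩ := hVne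
  have aux : ∀ (i : ℕ) (T : Set (Fin d → ℤ)), T ∈ C → V ⊆ T → (∀ z ∈ T, m ≤ g z) →
      T.encard + (i : ℕ∞) = (n : ℕ∞) + 1 → False := by
    intro i
    induction i with
    | zero =>
      intro T hTC hVT hTg hcard
      have hTN : T ∈ Nn C n x₀ := ⟨hTC, hVT hx₀, by simpa using hcard⟩
      have h1 : m ≤ sInf (g '' T) := by
        apply le_csInf (Set.Nonempty.image _ ⟨x₀, hVT hx₀⟩)
        rintro r ⟨z, hz, rfl⟩
        exact hTg z hz
      have h2 : m ≤ h x₀ := h1.trans (le_Ln g hTN)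
      exact absurd h2 (not_le.2 (hVlt x₀ hx₀))
    | succ i ih =>
      intro T hTC hVT hTg hcard
      have harith : T.encard + (i : ℕ∞) = (n : ℕ∞) := by
        push_cast at hcard
        rw [← add_assoc] at hcard
        exact WithTop.add_right_cancel ENat.one_ne_top hcard
      have hTn : T.encard ≤ (n : ℕ∞) := le_self_add.trans_eq harith
      have hTfin : T.Finite := Set.encard_lt_top_iff.mp
        (lt_of_le_of_lt hTn (lt_top_iff_ne_top.2 (ENat.coe_ne_top n)))
      have hcard' : ∀ y ∉ T, (insert y T).encard + (i : ℕ∞) = (n : ℕ∞) + 1 := by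
        intro y hyT
        rw [Set.encard_insert_of_notMem hyT, add_assoc, add_comm (1 : ℕ∞) (i : ℕ∞)]
        push_cast at hcard
        exact hcard
      by_cases hcase : ∃ y ∈ adjSet C V, y ∉ T
      · obtain ⟨y, hyadj, hyT⟩ := hcase
        have hins : insert y T ∈ C := by
          have hu := union_mem hC hyadj.2 hTC ⟨x₀, Or.inr hx₀, hVT hx₀⟩
          rwa [Set.insert_union, Set.union_eq_self_of_subset_left hVT] at hu
        apply ih (insert y T) hins (hVT.trans (subset_insert _ _)) ?_ (hcard' y hyT)
        rintro w (rfl | hw)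
        · exact hgadj w hyadj
        · exact hTg w hw
      · push_neg at hcase
        by_cases hcase2 : ∃ z ∈ adjSet C T, m ≤ g z
        · obtain ⟨z, hzadj, hzg⟩ := hcase2
          apply ih (insert z T) hzadj.2 (hVT.trans (subset_insert _ _)) ?_ (hcard' z hzadj.1)
          rintro w (rfl | hw)
          · exact hzg
          · exact hTg w hw
        · push_neg at hcase2
          have hadjTfin : (adjSet C T).Finite := hadj T hTC hTfin
          have hadjTne : (adjSet C T).Nonempty := exists_adj hd hC hTC hTfin
          obtain ⟨y₀, hy₀⟩ := hadjne
          have hy₀T : y₀ ∈ T := hcase y₀ hy₀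
          have hup : h y₀ ≤ sSup (g '' adjSet C T) := by
            apply csSup_le ((Nn_nonempty hd hC y₀).image _)
            rintro r ⟨W, hW, rfl⟩
            obtain ⟨z, hzadj, hzW⟩ := exists_adj_mem hC hTC hW.1 hy₀T hW.2.1
              (Nn_not_subset hW hTn)
            exact (sInf_image_le (Nn_finite hW) hzW).trans (le_sSup_image hadjTfin hzadj)
          have hlt' : sSup (g '' adjSet C T) < m := by
            obtain ⟨z₀, hz₀, he⟩ := exists_sSup_image_eq (f := g) hadjTfin hadjTne
            rw [he]
            exact hcase2 z₀ hz₀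
          exact absurd (hmle y₀ hy₀) (not_le.2 (hup.trans_lt hlt'))
  obtain ⟨k, hk⟩ : ∃ k : ℕ, V.encard = (k : ℕ∞) :=
    ⟨hVfin.toFinset.card, Set.Finite.encard_eq_coe_toFinset_card hVfin⟩
  have hkn : k ≤ n := by
    rw [hk] at hVn
    exact_mod_cast hVn
  apply aux (n + 1 - k) V hVC subset_rfl hgV
  rw [hk, ← Nat.cast_add]
  have : k + (n + 1 - k) = n + 1 := by omega
  rw [this]
  push_cast
  ring

lemma keyLemma_max (hd : 1 ≤ d) (hC : GoodConnection C)
    (hadj : ∀ V ∈ C, V.Finite → (adjSet C V).Finite)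
    {g : (Fin d → ℤ) → ℝ} (hL : ∀ x, g x ≤ Ln C n g x) :
    ∀ V, V.encard ≤ (n : ℕ∞) → ¬ IsLocalMaxSet C (Un C n g) V := by
  intro V hVn hmax
  have hU' : ∀ x, Un C n (-g) x ≤ (-g) x := by
    intro x
    rw [Un_neg]
    simp only [Pi.neg_apply]
    linarith [hL x]
  apply keyLemma_min hd hC hadj hU' V hVn
  rw [Ln_neg]
  exact (isLocalMinSet_neg_iff (Un C n g) V).2 hmax

end Core

/-- `(L_n∘U_n)(f)` and `(U_n∘L_n)(f)` have no local maximum or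
minimum sets of cardinality at most `n`; moreover `(L_n∘U_n)(f) = f` and
`(U_n∘L_n)(f) = f` hold iff `f` has no local maximum or minimum set of
cardinality at most `n`. -/
theorem LnUn_UnLn_smoothing {d : ℕ} (hd : 1 ≤ d)
    (C : Set (Set (Fin d → ℤ))) (hC : GoodConnection C)
    (hadj : ∀ V ∈ C, V.Finite → (adjSet C V).Finite)
    (n : ℕ) (hn : 1 ≤ n) (f : (Fin d → ℤ) → ℝ) :
    (∀ V, V.encard ≤ (n : ℕ∞) →
      ¬ IsLocalMaxSet C (Ln C n (Un C n f)) V ∧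
      ¬ IsLocalMinSet C (Ln C n (Un C n f)) V ∧
      ¬ IsLocalMaxSet C (Un C n (Ln C n f)) V ∧
      ¬ IsLocalMinSet C (Un C n (Ln C n f)) V) ∧
    ((Ln C n (Un C n f) = f ∧ Un C n (Ln C n f) = f) ↔
      ∀ V, V.encard ≤ (n : ℕ∞) →
        ¬ IsLocalMaxSet C f V ∧ ¬ IsLocalMinSet C f V) := by
  have main1 : ∀ V, V.encard ≤ (n : ℕ∞) →
      ¬ IsLocalMaxSet C (Ln C n (Un C n f)) V ∧
      ¬ IsLocalMinSet C (Ln C n (Un C n f)) V ∧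
      ¬ IsLocalMaxSet C (Un C n (Ln C n f)) V ∧
      ¬ IsLocalMinSet C (Un C n (Ln C n f)) V := by
    intro V hV
    refine ⟨?_, ?_, ?_, ?_⟩
    · intro hmax
      obtain ⟨x, hx⟩ := hmax.2.2.1
      have h1 := Ln_lt_of_isLocalMaxSet hd hC hadj hmax hV x hx
      rw [Ln_idem hd hC] at h1
      exact lt_irrefl _ h1
    · exact keyLemma_min hd hC hadj
        (fun x => le_of_eq (congrFun (Un_idem hd hC f) x)) V hV
    · exact keyLemma_max hd hC hadj
        (fun x => ge_of_eq (congrFun (Ln_idem hd hC f) x)) V hV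
    · intro hmin
      obtain ⟨x, hx⟩ := hmin.2.2.1
      have h1 := lt_Un_of_isLocalMinSet hd hC hadj hmin hV x hx
      rw [Un_idem hd hC] at h1
      exact lt_irrefl _ h1
  refine ⟨main1, ?_, ?_⟩
  · rintro ⟨h1, _⟩ V hV
    refine ⟨?_, ?_⟩
    · rw [← h1]
      exact (main1 V hV).1
    · rw [← h1]
      exact (main1 V hV).2.1
  · intro hno
    have hUn : Un C n f = f := by
      funext x
      refine le_antisymm ?_ (self_le_Un hd hC f x)
      by_contra hcon
      push_neg at hcon
      obtain ⟨V, hV, hmin⟩ := exists_isLocalMinSet_of_lt_Un hd hC hcon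
      exact (hno V hV).2 hmin
    have hLn : Ln C n f = f := by
      funext x
      refine le_antisymm (Ln_le_self hd hC f x) ?_
      by_contra hcon
      push_neg at hcon
      obtain ⟨V, hV, hmax⟩ := exists_isLocalMaxSet_of_Ln_lt hd hC hcon
      exact (hno V hV).1 hmax
    exact ⟨by rw [hUn]; exact hLn, by rw [hLn]; exact hUn⟩
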